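/- Let 𝐀 = (A^(m), p^(m,m+1))_{m∈ω} be a tower of proper Polish chain complexes, and let Local : H_n(holim 𝐀) → ∏_{k∈ω} H_n(A^(k)) be the group homomorphism sending the class of a cycle z = (z_m, z_{m0,m1}) to the sequence ([z_k])_{k∈ω}. Then for every n ∈ ℤ: (i) the image of Local equals the inverse limit lim_k H_n(A^(k)), i.e., the subgroup of sequences (h_k) with H_n(p^(k,k+1))(h_{k+1}) = h_k for all k; and (ii) the kernel of Local equals H_n^∞(holim 𝐀), i.e., for a cycle z ∈ Z_n(holim 𝐀), Local([z]) = 0 if and only if z lies in the closure of B_n(holim 𝐀) in (holim 𝐀)_n. -/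

import Mathlib

/-!
A coherent family `z_{m,m+k}` is determined by its entries `z_{m,m+1}`, and every choice of
these extends to one (by partial sums of `p^(m,m+j) c_{m+j}`). So the cycle condition on
`holim 𝐀` amounts to `∂ z_{m,m+1} = ±(p z_{m+1} - z_m)`, which gives (i). For (ii), if every
`z_m = ∂ u_m`, descend from `u_T` by `W_m = p W_{m+1} ∓ z_{m,m+1}`: the boundary of `(W, 0)`
agrees with `z` on all coordinates with `m + k ≤ T`, so these boundaries converge to `z`.
Conversely `B(A^(m))` is closed and contains the `m`-th coordinate of every boundary, hence of
every limit of boundaries.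
-/

/-- `(-1)^n` for `n : ℤ`. -/
def sgn (n : ℤ) : ℤ := if Even n then 1 else -1

/-- Composite bonding maps `p^(m, m+k)` of a tower. -/
def pcomp {A : ℕ → ℤ → Type*} [∀ m n, AddCommGroup (A m n)]
    (p : ∀ (m : ℕ) (n : ℤ), A (m + 1) n →+ A m n) (n : ℤ) :
    ∀ m k : ℕ, A (m + k) n →+ A m n
  | _, 0 => AddMonoidHom.id _
  | m, (k + 1) => (pcomp p n m k).comp (p (m + k) n)

lemma sgn_mul_self (n : ℤ) : sgn n * sgn n = 1 := by
  unfold sgn; split <;> norm_num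

lemma sgn_add_one (n : ℤ) : sgn (n + 1) = -sgn n := by
  unfold sgn
  by_cases h : Even n <;> simp [h]

lemma sgn_smul_sgn_smul {G : Type*} [AddCommGroup G] (n : ℤ) (x : G) :
    sgn n • sgn n • x = x := by
  rw [smul_smul, sgn_mul_self, one_smul]

lemma add_sgn_smul_eq_zero_iff {G : Type*} [AddCommGroup G] (n : ℤ) (a b : G) :
    a + sgn n • b = 0 ↔ a = sgn (n + 1) • b := by
  rw [sgn_add_one, neg_smul, add_eq_zero_iff_eq_neg]

section Tower

variable {A : ℕ → ℤ → Type*} [∀ m n, AddCommGroup (A m n)]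
  (p : ∀ (m : ℕ) (n : ℤ), A (m + 1) n →+ A m n)

lemma pcomp_pcomp (n : ℤ) (c : ∀ i, A i n) (m k j : ℕ) :
    pcomp p n m k (pcomp p n (m + k) j (c (m + k + j))) =
      pcomp p n m (k + j) (c (m + (k + j))) := by
  induction j generalizing c with
  | zero => rfl
  | succ j ih => exact ih (fun i => p i n (c (i + 1)))

lemma pcomp_d (d : ∀ (m : ℕ) (n : ℤ), A m (n + 1) →+ A m n)
    (hpchain : ∀ (m : ℕ) (n : ℤ) (x : A (m + 1) (n + 1)),
      p m n (d (m + 1) n x) = d m n (p m (n + 1) x))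
    (n : ℤ) (m k : ℕ) (x : A (m + k) (n + 1)) :
    pcomp p n m k (d (m + k) n x) = d m n (pcomp p (n + 1) m k x) := by
  induction k with
  | zero => rfl
  | succ k ih => exact (congrArg (pcomp p n m k) (hpchain _ n x)).trans (ih _)

/-- The coherence condition on the second component `f m k = z_{m,m+k}` of `holim 𝐀`. -/
def IsCoherent (n : ℤ) (f : ∀ m, ℕ → A m n) : Prop :=
  ∀ m k l, f m k + pcomp p n m k (f (m + k) l) = f m (k + l)

/-- `p^(m,m+k) w_{m+k} - w_m`, the second component of the differential of `(w, 0)`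
up to sign. -/
def pcompDiff (n : ℤ) (w : ∀ m, A m n) (m k : ℕ) : A m n :=
  pcomp p n m k (w (m + k)) - w m

lemma pcompDiff_one (n : ℤ) (w : ∀ m, A m n) (m : ℕ) :
    pcompDiff p n w m 1 = p m n (w (m + 1)) - w m := rfl

lemma isCoherent_pcompDiff (n : ℤ) (w : ∀ m, A m n) : IsCoherent p n (pcompDiff p n w) := by
  intro m k l
  simp only [pcompDiff, map_sub, pcomp_pcomp p n w]
  abel

namespace IsCoherent

variable {p} {n : ℤ} {f g : ∀ m, ℕ → A m n}

lemma apply_zero (hf : IsCoherent p n f) (m : ℕ) : f m 0 = 0 :=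
  add_eq_left.mp (hf m 0 0)

lemma zsmul (hf : IsCoherent p n f) (a : ℤ) : IsCoherent p n fun m k => a • f m k := by
  intro m k l
  rw [map_zsmul, ← smul_add, hf]

lemma map_d (d : ∀ (m : ℕ) (n : ℤ), A m (n + 1) →+ A m n)
    (hpchain : ∀ (m : ℕ) (n : ℤ) (x : A (m + 1) (n + 1)),
      p m n (d (m + 1) n x) = d m n (p m (n + 1) x))
    {f : ∀ m, ℕ → A m (n + 1)} (hf : IsCoherent p (n + 1) f) :
    IsCoherent p n fun m k => d m n (f m k) := by
  intro m k l
  rw [pcomp_d p d hpchain, ← map_add, hf]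

lemma eq_of_apply_one (hf : IsCoherent p n f) (hg : IsCoherent p n g) {T : ℕ}
    (h : ∀ m, m + 1 ≤ T → f m 1 = g m 1) : ∀ m k, m + k ≤ T → f m k = g m k := by
  intro m k
  induction k with
  | zero => intro _; rw [hf.apply_zero, hg.apply_zero]
  | succ k ih =>
    intro hk
    rw [← hf m k 1, ← hg m k 1, ih (by omega), h (m + k) (by omega)]

end IsCoherent

def pcompSum (n : ℤ) (c : ∀ m, A m n) (m k : ℕ) : A m n :=
  ∑ j ∈ Finset.range k, pcomp p n m j (c (m + j))

lemma pcompSum_one (n : ℤ) (c : ∀ m, A m n) (m : ℕ) : pcompSum p n c m 1 = c m := by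
  simp [pcompSum, pcomp]

lemma isCoherent_pcompSum (n : ℤ) (c : ∀ m, A m n) : IsCoherent p n (pcompSum p n c) := by
  intro m k l
  induction l with
  | zero => simp [pcompSum]
  | succ l ih =>
    simp only [pcompSum] at ih ⊢
    rw [Finset.sum_range_succ, map_add, ← add_assoc, ih, pcomp_pcomp p n c m k l,
      ← Finset.sum_range_succ]
    rfl

def backwardLift (n : ℤ) (u c : ∀ m, A m n) : ℕ → ∀ m, A m n
  | 0, m => u m
  | k + 1, m => p m n (backwardLift n u c k (m + 1)) - c m

lemma backwardLift_sub (n : ℤ) (u c : ∀ m, A m n) {T m : ℕ} (hm : m + 1 ≤ T) :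
    p m n (backwardLift p n u c (T - (m + 1)) (m + 1)) - backwardLift p n u c (T - m) m =
      c m := by
  obtain ⟨j, hj⟩ : ∃ j, T - m = j + 1 := ⟨T - (m + 1), by omega⟩
  rw [hj, show T - (m + 1) = j by omega, backwardLift, sub_sub_cancel]

lemma d_backwardLift (d : ∀ (m : ℕ) (n : ℤ), A m (n + 1) →+ A m n)
    (hpchain : ∀ (m : ℕ) (n : ℤ) (x : A (m + 1) (n + 1)),
      p m n (d (m + 1) n x) = d m n (p m (n + 1) x))
    {n : ℤ} {z : ∀ m, A m n} {u c : ∀ m, A m (n + 1)} (hu : ∀ m, d m n (u m) = z m)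
    (hc : ∀ m, d m n (c m) = p m n (z (m + 1)) - z m) (k m : ℕ) :
    d m n (backwardLift p (n + 1) u c k m) = z m := by
  induction k generalizing m with
  | zero => exact hu m
  | succ k ih => rw [backwardLift, map_sub, ← hpchain, ih, hc, sub_sub_cancel]

end Tower

section Holim

variable {A : ℕ → ℤ → Type*} [∀ m n, AddCommGroup (A m n)]
  {d : ∀ (m : ℕ) (n : ℤ), A m (n + 1) →+ A m n} {p : ∀ (m : ℕ) (n : ℤ), A (m + 1) n →+ A m n}

/-- `B_{N+1}(holim 𝐀)`. -/
def holimBoundaries (d : ∀ (m : ℕ) (n : ℤ), A m (n + 1) →+ A m n)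
    (p : ∀ (m : ℕ) (n : ℤ), A (m + 1) n →+ A m n) (N : ℤ) :
    Set ((∀ m, A m (N + 1)) × (∀ m, ℕ → A m (N + 1 + 1))) :=
  {y | ∃ (w : ∀ m, A m (N + 1 + 1)) (w2 : ∀ m, ℕ → A m (N + 1 + 1 + 1)),
    IsCoherent p (N + 1 + 1 + 1) w2 ∧
      y = (fun m => d m (N + 1) (w m),
        fun m k => d m (N + 1 + 1) (w2 m k) + sgn (N + 1 + 1) • pcompDiff p (N + 1 + 1) w m k)}

lemma d_sgn_smul_apply_one {N : ℤ} {z : ∀ m, A m (N + 1)} {z2 : ∀ m, ℕ → A m (N + 1 + 1)}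
    (hcyc : ∀ m k, d m (N + 1) (z2 m k) + sgn (N + 1) • pcompDiff p (N + 1) z m k = 0)
    (m : ℕ) :
    d m (N + 1) (sgn (N + 1 + 1) • z2 m 1) = p m (N + 1) (z (m + 1)) - z m := by
  rw [map_zsmul, (add_sgn_smul_eq_zero_iff _ _ _).mp (hcyc m 1), sgn_smul_sgn_smul]
  rfl

lemma exists_isCoherent_of_forall_exists_sub_eq_d
    (hpchain : ∀ (m : ℕ) (n : ℤ) (x : A (m + 1) (n + 1)),
      p m n (d (m + 1) n x) = d m n (p m (n + 1) x))
    {N : ℤ} {h : ∀ m, A m (N + 1)}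
    (hb : ∀ m, ∃ u : A m (N + 1 + 1), p m (N + 1) (h (m + 1)) - h m = d m (N + 1) u) :
    ∃ z2 : ∀ m, ℕ → A m (N + 1 + 1), IsCoherent p (N + 1 + 1) z2 ∧
      ∀ m k, d m (N + 1) (z2 m k) + sgn (N + 1) • pcompDiff p (N + 1) h m k = 0 := by
  choose u hu using hb
  have hz2 := isCoherent_pcompSum p (N + 1 + 1) fun m => sgn (N + 1 + 1) • u m
  refine ⟨_, hz2, fun m k => (add_sgn_smul_eq_zero_iff _ _ _).mpr ?_⟩
  refine (hz2.map_d d hpchain).eq_of_apply_one ((isCoherent_pcompDiff p _ h).zsmul _)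
    (fun m _ => ?_) m k le_rfl
  rw [pcompSum_one, map_zsmul, ← hu]
  rfl

lemma mem_closure_of_forall_exists_eq_of_add_le {X : Type*} [TopologicalSpace X]
    {Y : ℕ → Type*} [∀ m, TopologicalSpace (Y m)] {S : Set (X × ∀ m, ℕ → Y m)}
    {x : X} {y : ∀ m, ℕ → Y m}
    (h : ∀ T, ∃ s ∈ S, s.1 = x ∧ ∀ m k, m + k ≤ T → s.2 m k = y m k) : (x, y) ∈ closure S := by
  choose s hsS hs1 hs2 using h
  refine mem_closure_of_tendsto (b := Filter.atTop) (f := s) ?_ (.of_forall hsS)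
  rw [nhds_prod_eq, Filter.tendsto_prod_iff', tendsto_pi_nhds]
  refine ⟨by simpa only [hs1] using tendsto_const_nhds, fun m => tendsto_pi_nhds.mpr fun k => ?_⟩
  exact tendsto_const_nhds.congr'
    (Filter.eventually_atTop.mpr ⟨m + k, fun T hT => (hs2 T m k hT).symm⟩)

lemma mem_closure_holimBoundaries [∀ m n, TopologicalSpace (A m n)]
    (hpchain : ∀ (m : ℕ) (n : ℤ) (x : A (m + 1) (n + 1)),
      p m n (d (m + 1) n x) = d m n (p m (n + 1) x))
    {N : ℤ} {z : ∀ m, A m (N + 1)} {z2 : ∀ m, ℕ → A m (N + 1 + 1)}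
    (hcoh : IsCoherent p (N + 1 + 1) z2)
    (hcyc : ∀ m k, d m (N + 1) (z2 m k) + sgn (N + 1) • pcompDiff p (N + 1) z m k = 0)
    (hb : ∀ m, ∃ u : A m (N + 1 + 1), z m = d m (N + 1) u) :
    (z, z2) ∈ closure (holimBoundaries d p N) := by
  choose u hu using hb
  set c := fun m => sgn (N + 1 + 1) • z2 m 1
  refine mem_closure_of_forall_exists_eq_of_add_le fun T => ?_
  set W := fun m => backwardLift p (N + 1 + 1) u c (T - m) m
  refine ⟨_, ⟨W, 0, fun _ _ _ => by simp, rfl⟩,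
    funext fun m =>
      d_backwardLift p d hpchain (fun m => (hu m).symm) (d_sgn_smul_apply_one hcyc) (T - m) m,
    fun m k hmk => ?_⟩
  simp only [Pi.zero_apply, map_zero, zero_add]
  refine ((isCoherent_pcompDiff p _ W).zsmul _).eq_of_apply_one hcoh (fun m hm => ?_) m k hmk
  rw [pcompDiff_one, backwardLift_sub p _ u c hm, sgn_smul_sgn_smul]

lemma exists_eq_d_of_mem_closure_holimBoundaries [∀ m n, TopologicalSpace (A m n)]
    (hproper : ∀ (m : ℕ) (n : ℤ), IsClosed ((d m n).range : Set (A m n)))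
    {N : ℤ} {z : ∀ m, A m (N + 1)} {z2 : ∀ m, ℕ → A m (N + 1 + 1)}
    (hz : (z, z2) ∈ closure (holimBoundaries d p N)) (m : ℕ) :
    ∃ u : A m (N + 1 + 1), z m = d m (N + 1) u := by
  have hmaps : Set.MapsTo (fun y => y.1 m) (holimBoundaries d p N) (d m (N + 1)).range := by
    rintro _ ⟨w, -, -, rfl⟩
    exact ⟨w m, rfl⟩
  obtain ⟨u, hu⟩ := (hproper m (N + 1)).closure_subset
    (map_mem_closure ((continuous_apply m).comp continuous_fst) hz hmaps)
  exact ⟨u, hu.symm⟩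

end Holim

-- `d m n` is the paper's `∂_{n+1}` on `A^(m)`, `z2 m k` is `z_{m,m+k}`, and the paper's degree
-- `n` is `N + 1`.
theorem local_image_and_kernel_for_holim_of_tower_general
    (A : ℕ → ℤ → Type*)
    [∀ m n, AddCommGroup (A m n)] [∀ m n, TopologicalSpace (A m n)]
    (d : ∀ (m : ℕ) (n : ℤ), A m (n + 1) →+ A m n)
    -- properness
    (hproper : ∀ (m : ℕ) (n : ℤ), IsClosed ((d m n).range : Set (A m n)))
    -- bonding chain maps
    (p : ∀ (m : ℕ) (n : ℤ), A (m + 1) n →+ A m n)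
    (hpchain : ∀ (m : ℕ) (n : ℤ) (x : A (m + 1) (n + 1)),
      p m n (d (m + 1) n x) = d m n (p m (n + 1) x)) :
    ∀ N : ℤ,
      -- (i) image of Local equals lim_k H_{N+1}(A^(k)):
      -- (⊆) the components of a cycle of holim 𝐀 have compatible classes
      ((∀ (z : ∀ m, A m (N + 1)) (z2 : ∀ (m k : ℕ), A m (N + 1 + 1)),
          (∀ m k l, z2 m k + pcomp p (N + 1 + 1) m k (z2 (m + k) l) = z2 m (k + l)) →
          (∀ m, d m N (z m) = 0) →
          (∀ m k, d m (N + 1) (z2 m k) +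
              sgn (N + 1) • (pcomp p (N + 1) m k (z (m + k)) - z m) = 0) →
          ∀ m, ∃ u : A m (N + 1 + 1), p m (N + 1) (z (m + 1)) - z m = d m (N + 1) u) ∧
        -- (⊇) every compatible family of classes lifts to a cycle of holim 𝐀
        (∀ h : ∀ m, A m (N + 1),
          (∀ m, d m N (h m) = 0) →
          (∀ m, ∃ u : A m (N + 1 + 1), p m (N + 1) (h (m + 1)) - h m = d m (N + 1) u) →
          ∃ (z : ∀ m, A m (N + 1)) (z2 : ∀ (m k : ℕ), A m (N + 1 + 1)),
            (∀ m k l, z2 m k + pcomp p (N + 1 + 1) m k (z2 (m + k) l) = z2 m (k + l)) ∧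
            (∀ m, d m N (z m) = 0) ∧
            (∀ m k, d m (N + 1) (z2 m k) +
                sgn (N + 1) • (pcomp p (N + 1) m k (z (m + k)) - z m) = 0) ∧
            ∀ m, ∃ u : A m (N + 1 + 1), z m - h m = d m (N + 1) u)) ∧
      -- (ii) kernel of Local equals H^∞_{N+1}(holim 𝐀)
      (∀ (z : ∀ m, A m (N + 1)) (z2 : ∀ (m k : ℕ), A m (N + 1 + 1)),
        (∀ m k l, z2 m k + pcomp p (N + 1 + 1) m k (z2 (m + k) l) = z2 m (k + l)) →
        (∀ m, d m N (z m) = 0) →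
        (∀ m k, d m (N + 1) (z2 m k) +
            sgn (N + 1) • (pcomp p (N + 1) m k (z (m + k)) - z m) = 0) →
        ((∀ m, ∃ u : A m (N + 1 + 1), z m = d m (N + 1) u) ↔
          ((z, z2) ∈ closure {y : (∀ m, A m (N + 1)) × (∀ (m k : ℕ), A m (N + 1 + 1)) |
            ∃ (w : ∀ m, A m (N + 1 + 1)) (w2 : ∀ (m k : ℕ), A m (N + 1 + 1 + 1)),
              (∀ m k l, w2 m k + pcomp p (N + 1 + 1 + 1) m k (w2 (m + k) l) = w2 m (k + l)) ∧
              y = (fun m => d m (N + 1) (w m),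
                   fun m k => d m (N + 1 + 1) (w2 m k) +
                     sgn (N + 1 + 1) • (pcomp p (N + 1 + 1) m k (w (m + k)) - w m))}))) := by
  intro N
  refine ⟨⟨fun z z2 _ _ hcyc m => ⟨_, (d_sgn_smul_apply_one hcyc m).symm⟩, fun h hz hb => ?_⟩,
    fun z z2 hcoh _ hcyc => ⟨mem_closure_holimBoundaries hpchain hcoh hcyc,
      fun hz m => exists_eq_d_of_mem_closure_holimBoundaries hproper hz m⟩⟩
  obtain ⟨z2, hcoh, hcyc⟩ := exists_isCoherent_of_forall_exists_sub_eq_d hpchain hb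
  exact ⟨h, z2, hcoh, hz, hcyc, fun m => ⟨0, by rw [sub_self, map_zero]⟩⟩

theorem local_image_and_kernel_for_holim_of_tower
    (A : ℕ → ℤ → Type*)
    [∀ m n, AddCommGroup (A m n)] [∀ m n, TopologicalSpace (A m n)]
    [∀ m n, IsTopologicalAddGroup (A m n)] [∀ m n, PolishSpace (A m n)]
    (d : ∀ (m : ℕ) (n : ℤ), A m (n + 1) →+ A m n)
    (hdc : ∀ m n, Continuous (d m n))
    (hdd : ∀ (m : ℕ) (n : ℤ) (x : A m (n + 1 + 1)), d m n (d m (n + 1) x) = 0)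
    -- properness
    (hproper : ∀ (m : ℕ) (n : ℤ), IsClosed ((d m n).range : Set (A m n)))
    -- bonding chain maps
    (p : ∀ (m : ℕ) (n : ℤ), A (m + 1) n →+ A m n)
    (hpc : ∀ m n, Continuous (p m n))
    (hpchain : ∀ (m : ℕ) (n : ℤ) (x : A (m + 1) (n + 1)),
      p m n (d (m + 1) n x) = d m n (p m (n + 1) x)) :
    ∀ N : ℤ,
      -- (i) image of Local equals lim_k H_{N+1}(A^(k)):
      -- (⊆) the components of a cycle of holim 𝐀 have compatible classes
      ((∀ (z : ∀ m, A m (N + 1)) (z2 : ∀ (m k : ℕ), A m (N + 1 + 1)),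
          (∀ m k l, z2 m k + pcomp p (N + 1 + 1) m k (z2 (m + k) l) = z2 m (k + l)) →
          (∀ m, d m N (z m) = 0) →
          (∀ m k, d m (N + 1) (z2 m k) +
              sgn (N + 1) • (pcomp p (N + 1) m k (z (m + k)) - z m) = 0) →
          ∀ m, ∃ u : A m (N + 1 + 1), p m (N + 1) (z (m + 1)) - z m = d m (N + 1) u) ∧
        -- (⊇) every compatible family of classes lifts to a cycle of holim 𝐀
        (∀ h : ∀ m, A m (N + 1),
          (∀ m, d m N (h m) = 0) →
          (∀ m, ∃ u : A m (N + 1 + 1), p m (N + 1) (h (m + 1)) - h m = d m (N + 1) u) →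
          ∃ (z : ∀ m, A m (N + 1)) (z2 : ∀ (m k : ℕ), A m (N + 1 + 1)),
            (∀ m k l, z2 m k + pcomp p (N + 1 + 1) m k (z2 (m + k) l) = z2 m (k + l)) ∧
            (∀ m, d m N (z m) = 0) ∧
            (∀ m k, d m (N + 1) (z2 m k) +
                sgn (N + 1) • (pcomp p (N + 1) m k (z (m + k)) - z m) = 0) ∧
            ∀ m, ∃ u : A m (N + 1 + 1), z m - h m = d m (N + 1) u)) ∧
      -- (ii) kernel of Local equals H^∞_{N+1}(holim 𝐀)
      (∀ (z : ∀ m, A m (N + 1)) (z2 : ∀ (m k : ℕ), A m (N + 1 + 1)),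
        (∀ m k l, z2 m k + pcomp p (N + 1 + 1) m k (z2 (m + k) l) = z2 m (k + l)) →
        (∀ m, d m N (z m) = 0) →
        (∀ m k, d m (N + 1) (z2 m k) +
            sgn (N + 1) • (pcomp p (N + 1) m k (z (m + k)) - z m) = 0) →
        ((∀ m, ∃ u : A m (N + 1 + 1), z m = d m (N + 1) u) ↔
          ((z, z2) ∈ closure {y : (∀ m, A m (N + 1)) × (∀ (m k : ℕ), A m (N + 1 + 1)) |
            ∃ (w : ∀ m, A m (N + 1 + 1)) (w2 : ∀ (m k : ℕ), A m (N + 1 + 1 + 1)),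
              (∀ m k l, w2 m k + pcomp p (N + 1 + 1 + 1) m k (w2 (m + k) l) = w2 m (k + l)) ∧
              y = (fun m => d m (N + 1) (w m),
                   fun m k => d m (N + 1 + 1) (w2 m k) +
                     sgn (N + 1 + 1) • (pcomp p (N + 1 + 1) m k (w (m + k)) - w m))}))) :=
  local_image_and_kernel_for_holim_of_tower_general A d hproper p hpchain
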